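/- arXiv:1908.08250 — 6 statements merged into one kernel-verified Lean document; each statement's English description precedes it below -/
import Mathlib

section
/- If P is a uniquely generated finite poset on n elements, then the chromatic number of its cover graph is at most ⌊log₂ n⌋ + 1. -/
/-- The cover graph of a poset: `x` and `y` adjacent iff one covers the other. -/
def coverGraph (α : Type*) [PartialOrder α] : SimpleGraph α :=
  SimpleGraph.fromRel (· ⋖ ·)

/-- A poset is uniquely generated if every comparable pair `x < y` is connected
by a unique covering chain `x = v₁ ⋖ v₂ ⋖ ⋯ ⋖ v_k = y`. -/
def UniquelyGenerated (α : Type*) [PartialOrder α] : Prop :=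
  ∀ x y : α, x < y →
    ∃! l : List α, List.Chain (· ⋖ ·) x l ∧ l.getLast? = some y

/-!
Colour the cover graph greedily from the bottom: each element receives the least colour not
used by the elements it covers. In a uniquely generated poset the down-sets of distinct lower
covers of `x` are disjoint, since two lower covers above a common `z` would give two covering
chains from `z` to `x`. An element of colour `k` has lower covers of colours `0, …, k - 1`,
so by induction its down-set has at least `1 + ∑_{i<k} 2^i = 2^k` elements. Hence every
colour is at most `log₂ n`.
-/

open Finset

section

variable {α : Type*} [PartialOrder α]

theorem UniquelyGenerated.eq_of_covBy_of_le [LocallyFiniteOrder α] (h : UniquelyGenerated α)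
    {x w₁ w₂ z : α} (h₁ : w₁ ⋖ x) (h₂ : w₂ ⋖ x) (hz₁ : z ≤ w₁) (hz₂ : z ≤ w₂) : w₁ = w₂ := by
  obtain ⟨l₁, hc₁, hl₁⟩ :=
    List.exists_isChain_cons_of_relationReflTransGen (le_iff_reflTransGen_covBy.1 hz₁)
  obtain ⟨l₂, hc₂, hl₂⟩ :=
    List.exists_isChain_cons_of_relationReflTransGen (le_iff_reflTransGen_covBy.1 hz₂)
  have extend : ∀ {l : List α} {w : α}, (z :: l).IsChain (· ⋖ ·) →
      (z :: l).getLast (List.cons_ne_nil _ _) = w → w ⋖ x →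
      (z :: l ++ [x]).IsChain (· ⋖ ·) ∧ (l ++ [x]).getLast? = some x := by
    intro l w hc hl hw
    exact ⟨hc.append (.singleton x) (by simp [List.getLast?_eq_getLast_of_ne_nil, hl, hw]),
      by simp⟩
  have hl : l₁ = l₂ := List.append_cancel_right <|
    (h z x (hz₁.trans_lt h₁.lt)).unique (extend hc₁ hl₁ h₁) (extend hc₂ hl₂ h₂)
  subst hl
  exact hl₁.symm.trans hl₂

theorem UniquelyGenerated.disjoint_Iic_of_covBy [LocallyFiniteOrder α] [LocallyFiniteOrderBot α]
    (h : UniquelyGenerated α) {x w₁ w₂ : α} (h₁ : w₁ ⋖ x) (h₂ : w₂ ⋖ x) (hne : w₁ ≠ w₂) :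
    Disjoint (Iic w₁) (Iic w₂) :=
  disjoint_left.2 fun _ hz₁ hz₂ ↦ hne (h.eq_of_covBy_of_le h₁ h₂ (mem_Iic.1 hz₁) (mem_Iic.1 hz₂))

section greedyColor

variable [WellFoundedLT α]

noncomputable def greedyColor : α → ℕ :=
  wellFounded_lt.fix fun x color ↦ sInf {n | ∀ w (hw : w ⋖ x), color w hw.lt ≠ n}

theorem greedyColor_eq (x : α) :
    greedyColor x = sInf {n | ∀ w, w ⋖ x → greedyColor w ≠ n} := by
  rw [greedyColor, WellFounded.fix_eq]

theorem greedyColor_ne_of_covBy [Finite α] {w x : α} (hw : w ⋖ x) :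
    greedyColor w ≠ greedyColor x := by
  have hne : {n | ∀ w, w ⋖ x → greedyColor w ≠ n}.Nonempty := by
    refine ((Set.finite_range (greedyColor (α := α))).infinite_compl.mono ?_).nonempty
    rintro n hn w - rfl
    exact hn ⟨w, rfl⟩
  have := Nat.sInf_mem hne
  rw [← greedyColor_eq] at this
  exact this w hw

theorem exists_covBy_greedyColor_eq {x : α} {i : ℕ} (hi : i < greedyColor x) :
    ∃ w, w ⋖ x ∧ greedyColor w = i := by
  rw [greedyColor_eq] at hi
  simpa using Nat.notMem_of_lt_sInf hi

theorem two_pow_greedyColor_le_card_Iic [LocallyFiniteOrderBot α]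
    (hdisj : ∀ {x w₁ w₂ : α}, w₁ ⋖ x → w₂ ⋖ x → w₁ ≠ w₂ → Disjoint (Iic w₁) (Iic w₂))
    (x : α) : 2 ^ greedyColor x ≤ #(Iic x) := by
  induction x using WellFoundedLT.induction with
  | _ x ih =>
  classical
  set k := greedyColor x
  have hcovers : ∀ i < k, ∃ w, w ⋖ x ∧ greedyColor w = i := fun _ ↦ exists_covBy_greedyColor_eq
  have : Nonempty α := ⟨x⟩
  choose! w hw hcolor using hcovers
  have hpairwise : (range k : Set ℕ).PairwiseDisjoint (Iic ∘ w) := by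
    intro i hi j hj hij
    refine hdisj (hw i (mem_range.1 hi)) (hw j (mem_range.1 hj)) fun hwij ↦ hij ?_
    rw [← hcolor i (mem_range.1 hi), ← hcolor j (mem_range.1 hj), hwij]
  have hsub : (range k).biUnion (Iic ∘ w) ⊆ Iio x := by
    simp only [subset_iff, mem_biUnion, mem_range, Function.comp_apply, mem_Iic, mem_Iio]
    rintro z ⟨i, hi, hz⟩
    exact hz.trans_lt (hw i hi).lt
  calc 2 ^ k = ∑ i ∈ range k, 2 ^ i + 1 := by
        rw [Nat.geomSum_eq le_rfl, Nat.div_one, Nat.sub_add_cancel Nat.one_le_two_pow]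
    _ ≤ ∑ i ∈ range k, #(Iic (w i)) + 1 := by
        gcongr with i hi
        simpa [hcolor i (mem_range.1 hi)] using ih (w i) (hw i (mem_range.1 hi)).lt
    _ = #((range k).biUnion (Iic ∘ w)) + 1 := by rw [card_biUnion hpairwise]; rfl
    _ ≤ #(Iio x) + 1 := by gcongr
    _ = #(Iic x) := by rw [Iic_eq_cons_Iio, card_cons]

noncomputable def greedyColoring [Finite α] : (coverGraph α).Coloring ℕ :=
  .mk greedyColor fun hab ↦ by
    rcases ((SimpleGraph.fromRel_adj _ _ _).1 hab).2 with hcov | hcov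
    exacts [greedyColor_ne_of_covBy hcov, (greedyColor_ne_of_covBy hcov).symm]

end greedyColor

end

/-- If `P` is a uniquely generated finite poset on `n` elements, then the chromatic
number of its cover graph is at most `⌊log₂ n⌋ + 1`. -/
theorem stmt0 (α : Type*) [Fintype α] [PartialOrder α]
    (h : UniquelyGenerated α) :
    (coverGraph α).chromaticNumber ≤ Nat.log 2 (Fintype.card α) + 1 := by
  classical
  let : LocallyFiniteOrder α := Fintype.toLocallyFiniteOrder
  let : LocallyFiniteOrderBot α := .ofIic α (fun x ↦ {y | y ≤ x}) (by simp)
  have hcolor (x : α) : greedyColor x < Nat.log 2 (Fintype.card α) + 1 :=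
    Nat.lt_succ_of_le <| Nat.le_log_of_pow_le one_lt_two <|
      (two_pow_greedyColor_le_card_Iic h.disjoint_Iic_of_covBy x).trans (card_le_univ _)
  exact ((coverGraph α).colorable_iff_exists_bdd_nat_coloring _ |>.2
    ⟨greedyColoring, hcolor⟩).chromaticNumber_le
end

section
/- Let P be a uniquely generated finite poset with cover graph G. Color the vertices greedily in the order of a linear extension: each vertex v receives the smallest positive integer not used on the set C(v) of elements covered by v. Then for every vertex v receiving color k, the down-set T(v) = {u : u ≤ v} has at least 2^{k-1} elements. -/
/-- `c` is the greedy coloring of the cover graph along a linear extension: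
each vertex `v` gets the least positive integer not used on the set of
elements covered by `v` (these are exactly the already-colored neighbours that
matter, and this fixpoint property characterizes the greedy coloring along any
linear extension). -/
def IsGreedyColoring (α : Type*) [PartialOrder α] (c : α → ℕ) : Prop :=
  ∀ v : α, c v = sInf {k : ℕ | 1 ≤ k ∧ ∀ u : α, u ⋖ v → c u ≠ k}

section

open Finset

variable {α : Type*}

theorem LocallyFiniteOrderBot.wellFoundedLT [Preorder α] [LocallyFiniteOrderBot α] :
    WellFoundedLT α :=
  ⟨(measure fun a : α => #(Iic a)).wf.mono fun _ _ h => card_lt_card (Iic_ssubset_Iic.2 h)⟩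

namespace UniquelyGenerated

variable [PartialOrder α]

theorem exists_isChain_covBy (hug : UniquelyGenerated α) {w u : α} (hwu : w ≤ u) :
    ∃ l : List α, (w :: l).IsChain (· ⋖ ·) ∧ (w :: l).getLast? = some u := by
  obtain hwu | rfl := hwu.lt_or_eq
  · obtain ⟨l, ⟨hl, hlast⟩, -⟩ := hug w u hwu
    refine ⟨l, hl, ?_⟩
    cases l with
    | nil => simp at hlast
    | cons a l => simpa using hlast
  · exact ⟨[], List.isChain_singleton w, rfl⟩

theorem eq_of_le_of_covBy (hug : UniquelyGenerated α) {w u u' v : α}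
    (hu : u ⋖ v) (hu' : u' ⋖ v) (hwu : w ≤ u) (hwu' : w ≤ u') : u = u' := by
  have extend : ∀ {u}, u ⋖ v → ∀ l : List α, (w :: l).IsChain (· ⋖ ·) →
      (w :: l).getLast? = some u →
      (w :: (l ++ [v])).IsChain (· ⋖ ·) ∧ (l ++ [v]).getLast? = some v :=
    fun hu l hl hlast => ⟨hl.append (List.isChain_singleton v) (by simp_all), by simp⟩
  obtain ⟨l, hl, hlast⟩ := hug.exists_isChain_covBy hwu
  obtain ⟨l', hl', hlast'⟩ := hug.exists_isChain_covBy hwu'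
  obtain ⟨m, -, hm⟩ := hug w v (hwu.trans_lt hu.lt)
  have : l = l' := List.append_cancel_right <|
    (hm _ (extend hu l hl hlast)).trans (hm _ (extend hu' l' hl' hlast')).symm
  subst this
  simpa [hlast] using hlast'

end UniquelyGenerated

theorem IsGreedyColoring.exists_covBy_eq [PartialOrder α] {c : α → ℕ}
    (hc : IsGreedyColoring α c) {v : α} {j : ℕ} (hj : 1 ≤ j) (hjv : j < c v) :
    ∃ u, u ⋖ v ∧ c u = j := by
  rw [hc v] at hjv
  simpa [hj] using Nat.notMem_of_lt_sInf hjv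

theorem sum_Ico_one_two_pow (n : ℕ) : ∑ j ∈ Ico 1 n, 2 ^ (j - 1) = 2 ^ (n - 1) - 1 := by
  rw [sum_Ico_eq_sum_range]
  simpa using Nat.geomSum_eq le_rfl (n - 1)

theorem UniquelyGenerated.two_pow_le_card_Iic [PartialOrder α] [LocallyFiniteOrderBot α]
    (hug : UniquelyGenerated α) {c : α → ℕ} (hc : IsGreedyColoring α c) (v : α) :
    2 ^ (c v - 1) ≤ #(Iic v) := by
  classical
  have := LocallyFiniteOrderBot.wellFoundedLT (α := α)
  induction v using WellFoundedLT.induction with | _ v ih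
  set covers := {u ∈ Iio v | u ⋖ v}
  have hdisj : (covers : Set α).PairwiseDisjoint Iic := by
    intro u hu u' hu' hne
    rw [mem_coe, mem_filter] at hu hu'
    exact disjoint_left.2 fun w hw hw' =>
      hne (hug.eq_of_le_of_covBy hu.2 hu'.2 (mem_Iic.1 hw) (mem_Iic.1 hw'))
  have hcolors : Ico 1 (c v) ⊆ covers.image c := by
    intro j hj
    obtain ⟨hj1, hjv⟩ := mem_Ico.1 hj
    obtain ⟨u, hu, rfl⟩ := hc.exists_covBy_eq hj1 hjv
    exact mem_image_of_mem c (mem_filter.2 ⟨mem_Iio.2 hu.lt, hu⟩)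
  have hbelow : #(covers.biUnion Iic) + 1 ≤ #(Iic v) := by
    have hv : v ∉ covers.biUnion Iic := by
      simp only [mem_biUnion, mem_Iic, not_exists, not_and]
      exact fun u hu hvu => (hvu.trans_lt (mem_filter.1 hu).2.lt).false
    have hsub : insert v (covers.biUnion Iic) ⊆ Iic v :=
      insert_subset (mem_Iic.2 le_rfl)
        (biUnion_subset.2 fun u hu => Iic_subset_Iic.2 (mem_filter.1 hu).2.le)
    simpa [card_insert_of_notMem hv] using card_le_card hsub
  calc 2 ^ (c v - 1) = ∑ j ∈ Ico 1 (c v), 2 ^ (j - 1) + 1 := by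
        rw [sum_Ico_one_two_pow]; have := Nat.one_le_two_pow (n := c v - 1); omega
    _ ≤ ∑ j ∈ covers.image c, 2 ^ (j - 1) + 1 := by gcongr
    _ ≤ ∑ u ∈ covers, 2 ^ (c u - 1) + 1 := by
        gcongr; exact sum_image_le_of_nonneg fun _ _ => by positivity
    _ ≤ ∑ u ∈ covers, #(Iic u) + 1 := by
        gcongr with u hu; exact ih u (mem_Iio.1 (mem_filter.1 hu).1)
    _ = #(covers.biUnion Iic) + 1 := by rw [card_biUnion hdisj]
    _ ≤ #(Iic v) := hbelow

end

/-- In the greedy coloring of the cover graph of a uniquely generated finite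
poset, if `v` receives color `k` then the down-set `T(v) = {u : u ≤ v}` has at
least `2^(k-1)` elements. -/
theorem stmt1 (α : Type*) [Fintype α] [PartialOrder α]
    (hug : UniquelyGenerated α) (c : α → ℕ) (hc : IsGreedyColoring α c)
    (v : α) (k : ℕ) (hk : c v = k) :
    2 ^ (k - 1) ≤ Set.ncard {u : α | u ≤ v} := by
  classical
  let : LocallyFiniteOrderBot α :=
    LocallyFiniteOrderBot.ofIic α (fun v => Finset.univ.filter (· ≤ v)) (by simp)
  rw [← hk, show {u | u ≤ v} = (Finset.Iic v : Set α) from (Finset.coe_Iic v).symm,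
    Set.ncard_coe_finset]
  exact hug.two_pow_le_card_Iic hc v
end

section
/- If P is a uniquely generated finite poset, then for every element v, the subgraph of the cover graph of P induced on the down-set T(v) = {u : u ≤ v} is connected and acyclic (a tree). -/
namespace SimpleGraph

variable {V : Type*} [PartialOrder V] {G : SimpleGraph V}

theorem isAcyclic_of_unique_upper_neighbor (h_comp : ∀ ⦃a b⦄, G.Adj a b → a < b ∨ b < a)
    (h_up : ∀ ⦃a b c⦄, G.Adj a b → G.Adj a c → a < b → a < c → b = c) : G.IsAcyclic := by
  classical
  intro w c hc
  obtain ⟨u, hu_mem, hu_min⟩ := c.support.finite_toSet.exists_minimal ⟨w, c.start_mem_support⟩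
  let c' := c.rotate u hu_mem
  have hc' : c'.IsCycle := hc.rotate hu_mem
  have hnil : ¬ c'.Nil := hc'.not_nil
  have above : ∀ x ∈ c'.support, G.Adj u x → u < x := fun x hx hadj =>
    (h_comp hadj).resolve_right fun hxu =>
      hxu.not_ge (hu_min ((c.mem_support_rotate_iff u hu_mem).mp hx) hxu.le)
  exact hc'.snd_ne_penultimate <| h_up (c'.adj_snd hnil) (c'.adj_penultimate hnil).symm
    (above _ (List.mem_of_mem_tail (c'.snd_mem_tail_support hnil)) (c'.adj_snd hnil))
    (above _ (List.mem_of_mem_dropLast (c'.penultimate_mem_dropLast_support hnil))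
      (c'.adj_penultimate hnil).symm)

end SimpleGraph

section CoverGraph

open SimpleGraph

variable {α : Type*} [PartialOrder α]

theorem coverGraph_adj {a b : α} : (coverGraph α).Adj a b ↔ a ⋖ b ∨ b ⋖ a := by
  rw [coverGraph, fromRel_adj, and_iff_right_iff_imp]
  rintro (h | h)
  exacts [h.ne, h.ne']

variable [LocallyFiniteOrder α]

theorem exists_covBy_chain_of_covBy_of_le {a b v : α} (hab : a ⋖ b) (hbv : b ≤ v) :
    ∃ l : List α, (List.IsChain (· ⋖ ·) (a :: l) ∧ l.getLast? = some v) ∧ l.head? = some b := by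
  obtain ⟨l, hl, hlast⟩ :=
    List.exists_isChain_cons_of_relationReflTransGen (le_iff_reflTransGen_covBy.mp hbv)
  exact ⟨b :: l, ⟨List.isChain_cons_cons.mpr ⟨hab, hl⟩,
    by rw [List.getLast?_eq_some_getLast (List.cons_ne_nil _ _), hlast]⟩, rfl⟩

theorem UniquelyGenerated.eq_of_covBy_of_covBy (hug : UniquelyGenerated α) {a b c v : α}
    (hab : a ⋖ b) (hbv : b ≤ v) (hac : a ⋖ c) (hcv : c ≤ v) : b = c := by
  obtain ⟨lb, hlb, hb⟩ := exists_covBy_chain_of_covBy_of_le hab hbv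
  obtain ⟨lc, hlc, hc⟩ := exists_covBy_chain_of_covBy_of_le hac hcv
  rw [(hug a v (hab.lt.trans_le hbv)).unique hlb hlc, hc] at hb
  exact (Option.some_inj.mp hb).symm

theorem reachable_induce_coverGraph_Iic {v x : α} (hx : x ≤ v) :
    (induce {u : α | u ≤ v} (coverGraph α)).Reachable ⟨x, hx⟩ ⟨v, le_rfl⟩ := by
  induction le_iff_reflTransGen_covBy.mp hx using Relation.ReflTransGen.head_induction_on with
  | refl => rfl
  | head hxz hzv ih =>
    have hzv : _ ≤ v := le_iff_reflTransGen_covBy.mpr hzv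
    have hadj : (induce {u : α | u ≤ v} (coverGraph α)).Adj ⟨_, hx⟩ ⟨_, hzv⟩ :=
      coverGraph_adj.mpr (Or.inl hxz)
    exact hadj.reachable.trans (ih hzv)

theorem connected_induce_coverGraph_Iic (v : α) :
    (induce {u : α | u ≤ v} (coverGraph α)).Connected :=
  (connected_iff_exists_forall_reachable _).mpr
    ⟨⟨v, le_rfl⟩, fun x => (reachable_induce_coverGraph_Iic x.2).symm⟩

theorem UniquelyGenerated.isAcyclic_induce_coverGraph_Iic (hug : UniquelyGenerated α) (v : α) :
    (induce {u : α | u ≤ v} (coverGraph α)).IsAcyclic := by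
  have covBy_of_lt {a b : {u : α | u ≤ v}} (hadj : (induce _ (coverGraph α)).Adj a b)
      (hab : a < b) : (a : α) ⋖ b :=
    (coverGraph_adj.mp hadj).resolve_right fun hba => hba.lt.not_gt hab
  refine isAcyclic_of_unique_upper_neighbor (fun a b hadj => ?_) fun a b c hab hac hb hc => ?_
  · exact (coverGraph_adj.mp hadj).imp (Subtype.coe_lt_coe.mp ·.lt) (Subtype.coe_lt_coe.mp ·.lt)
  · exact Subtype.ext <|
      hug.eq_of_covBy_of_covBy (covBy_of_lt hab hb) b.2 (covBy_of_lt hac hc) c.2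

end CoverGraph

/-- If `P` is a uniquely generated finite poset, then for every `v` the subgraph
of the cover graph induced on the down-set `T(v) = {u : u ≤ v}` is a tree. -/
theorem stmt2 (α : Type*) [Fintype α] [PartialOrder α]
    (hug : UniquelyGenerated α) (v : α) :
    (SimpleGraph.induce {u : α | u ≤ v} (coverGraph α)).IsTree := by
  classical
  have : LocallyFiniteOrder α := Fintype.toLocallyFiniteOrder
  exact ⟨connected_induce_coverGraph_Iic v, hug.isAcyclic_induce_coverGraph_Iic v⟩
end

section
/- Let A and B be disjoint sets of size m, let 0 < d ≤ m, and let G be the random bipartite graph on A ∪ B where each pair (a,b) ∈ A × B is an edge independently with probability p = d/m. Then the probability that there exist subsets X ⊆ A and Y ⊆ B with |X|·|Y| ≥ 3m²/d and no edge between X and Y is at most 2^{-m}. -/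
set_option linter.deprecated false

open MeasureTheory ENNReal Finset

/-!
Union bound over the at most `4^m` pairs `(X, Y)`: for a fixed pair with `|X|·|Y| ≥ 3m²/d`,
all `|X|·|Y|` pairs are non-edges with probability
`(1 - d/m)^{|X||Y|} ≤ exp(-(d/m)|X||Y|) ≤ exp(-3m) ≤ 8^{-m}`, and `4^m · 8^{-m} = 2^{-m}`.
-/

lemma PMF.bernoulli_toMeasure_false {p : NNReal} (h : p ≤ 1) :
    (PMF.bernoulli p h).toMeasure {false} = 1 - (p : ℝ≥0∞) := by
  rw [PMF.toMeasure_apply_singleton _ _ (measurableSet_singleton _), PMF.bernoulli_apply,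
    Bool.cond_false, ENNReal.coe_sub, ENNReal.coe_one]

lemma Real.exp_neg_three_mul_le (n : ℕ) : Real.exp (-(3 * n)) ≤ 8⁻¹ ^ n := by
  have h8 : 8 ≤ Real.exp 3 := by
    calc (8 : ℝ) = 2 ^ 3 := by norm_num
      _ ≤ Real.exp 1 ^ 3 := by gcongr; exact Real.exp_one_gt_two.le
      _ = Real.exp 3 := by rw [← Real.exp_nat_mul]; norm_num
  calc Real.exp (-(3 * n)) = (Real.exp 3)⁻¹ ^ n := by
        rw [← Real.exp_neg, ← Real.exp_nat_mul]; ring_nf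
    _ ≤ 8⁻¹ ^ n := by gcongr

lemma one_sub_pow_le_inv_eight_pow {q : ℝ} (hq : q ≤ 1) {k n : ℕ} (hk : 3 * n ≤ q * k) :
    (1 - q) ^ k ≤ 8⁻¹ ^ n :=
  calc (1 - q) ^ k ≤ Real.exp (-q) ^ k := by
        gcongr
        exact Real.one_sub_le_exp_neg q
    _ = Real.exp (-(q * k)) := by rw [← Real.exp_nat_mul]; ring_nf
    _ ≤ Real.exp (-(3 * n)) := by gcongr
    _ ≤ 8⁻¹ ^ n := Real.exp_neg_three_mul_le n

lemma MeasureTheory.Measure.pi_forall_mem_product_eq_false {α β : Type*} [Fintype α] [Fintype β]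
    (ν : Measure Bool) [IsProbabilityMeasure ν] (X : Finset α) (Y : Finset β) :
    Measure.pi (fun _ : α × β => ν) {ω | ∀ x ∈ X, ∀ y ∈ Y, ω (x, y) = false}
      = ν {false} ^ (#X * #Y) := by
  have : {ω : α × β → Bool | ∀ x ∈ X, ∀ y ∈ Y, ω (x, y) = false}
      = ((X ×ˢ Y : Finset (α × β)) : Set (α × β)).pi fun _ => {false} := by
    ext ω
    simp only [Set.mem_ofPred_eq, coe_product, Set.mem_pi, Set.mem_prod, SetLike.mem_coe,
      Set.mem_singleton_iff, and_imp, Prod.forall]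
    tauto
  rw [this, Measure.pi_pi_finset, prod_const, card_product]

lemma MeasureTheory.Measure.pi_forall_mem_product_eq_false_le {α β : Type*} [Fintype α] [Fintype β]
    (ν : Measure Bool) [IsProbabilityMeasure ν] {q : ℝ} (hq : q ≤ 1)
    (hν : ν {false} = ENNReal.ofReal (1 - q)) (X : Finset α) (Y : Finset β) {n : ℕ}
    (hXY : 3 * n ≤ q * (#X * #Y)) :
    Measure.pi (fun _ : α × β => ν) {ω | ∀ x ∈ X, ∀ y ∈ Y, ω (x, y) = false} ≤ 8⁻¹ ^ n := by
  rw [Measure.pi_forall_mem_product_eq_false, hν, ← ENNReal.ofReal_pow (sub_nonneg.2 hq)]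
  calc ENNReal.ofReal ((1 - q) ^ (#X * #Y)) ≤ ENNReal.ofReal (8⁻¹ ^ n) :=
        ENNReal.ofReal_le_ofReal (one_sub_pow_le_inv_eight_pow hq (by push_cast; exact hXY))
    _ = 8⁻¹ ^ n := by
        rw [ENNReal.ofReal_pow (by norm_num), ENNReal.ofReal_inv_of_pos (by norm_num)]
        norm_num

lemma ENNReal.two_mul_two_mul_inv_eight : (2 * 2 * 8⁻¹ : ℝ≥0∞) = 2⁻¹ := by
  rw [show (8 : ℝ≥0∞) = 2 * 2 * 2 by norm_num, ENNReal.mul_inv (by norm_num) (by norm_num),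
    ← mul_assoc, ENNReal.mul_inv_cancel (by norm_num) (by norm_num), one_mul]

lemma MeasureTheory.Measure.pi_exists_large_empty_rectangle_le {m : ℕ} (ν : Measure Bool)
    [IsProbabilityMeasure ν] {d : ℝ} (hd : 0 < d) (hdm : d ≤ m)
    (hν : ν {false} = ENNReal.ofReal (1 - d / m)) :
    Measure.pi (fun _ : Fin m × Fin m => ν)
      {ω | ∃ X Y : Finset (Fin m), 3 * (m : ℝ) ^ 2 / d ≤ #X * #Y ∧
        ∀ x ∈ X, ∀ y ∈ Y, ω (x, y) = false} ≤ 2⁻¹ ^ m := by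
  have hm : (0 : ℝ) < m := hd.trans_le hdm
  set μ := Measure.pi fun _ : Fin m × Fin m => ν
  set large := (univ : Finset (Finset (Fin m) × Finset (Fin m))).filter
    fun XY => 3 * (m : ℝ) ^ 2 / d ≤ #XY.1 * #XY.2
  calc _ ≤ μ (⋃ XY ∈ large, {ω | ∀ x ∈ XY.1, ∀ y ∈ XY.2, ω (x, y) = false}) := by
        refine measure_mono ?_
        rintro ω ⟨X, Y, hXY, hω⟩
        exact Set.mem_biUnion (mem_filter.2 ⟨mem_univ (X, Y), hXY⟩) hω
    _ ≤ ∑ XY ∈ large, μ {ω | ∀ x ∈ XY.1, ∀ y ∈ XY.2, ω (x, y) = false} :=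
        measure_biUnion_finset_le _ _
    _ ≤ #large • 8⁻¹ ^ m := by
        refine sum_le_card_nsmul _ _ _ fun XY hXY => ?_
        refine Measure.pi_forall_mem_product_eq_false_le _ ((div_le_one hm).2 hdm) hν _ _ ?_
        calc 3 * (m : ℝ) = 3 * m ^ 2 / d * (d / m) := by field_simp
          _ ≤ #XY.1 * #XY.2 * (d / m) := by gcongr; exact (mem_filter.1 hXY).2
          _ = d / m * (#XY.1 * #XY.2) := mul_comm _ _
    _ ≤ (2 ^ m * 2 ^ m) • 8⁻¹ ^ m := by
        gcongr
        simpa using card_filter_le (univ : Finset (Finset (Fin m) × Finset (Fin m))) _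
    _ = 2⁻¹ ^ m := by
        rw [nsmul_eq_mul, ← ENNReal.two_mul_two_mul_inv_eight, mul_pow, mul_pow]
        push_cast; rfl

/-- Random bipartite graph between `A = Fin m` (left) and `B = Fin m` (right):
each cross pair is an edge independently with probability `p = d/m`.  The
probability that there are `X ⊆ A`, `Y ⊆ B` with `|X|·|Y| ≥ 3m²/d` and no edge
between `X` and `Y` is at most `2^{-m}`. -/
theorem stmt5 (m : ℕ) (d : ℝ) (hd : 0 < d) (hdm : d ≤ m)
    (p : ℝ≥0∞) (hp1 : p ≤ 1) (hp : p = ENNReal.ofReal (d / m)) :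
    (Measure.pi fun _ : Fin m × Fin m => (PMF.bernoulli p.toNNReal
        (by simpa using ENNReal.toNNReal_mono ENNReal.one_ne_top hp1)).toMeasure)
      {ω : Fin m × Fin m → Bool |
        ∃ X Y : Finset (Fin m),
          3 * (m : ℝ) ^ 2 / d ≤ (X.card : ℝ) * (Y.card : ℝ) ∧
          ∀ x ∈ X, ∀ y ∈ Y, ω (x, y) = false}
      ≤ 2⁻¹ ^ m := by
  refine Measure.pi_exists_large_empty_rectangle_le _ hd hdm
    ((PMF.bernoulli_toMeasure_false _).trans ?_)
  rw [ENNReal.coe_toNNReal (ne_top_of_le_ne_top one_ne_top hp1),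
    hp, ENNReal.ofReal_sub _ (by positivity), ENNReal.ofReal_one]
end

section
/- Let 1 ≤ h < k be integers and let I₁, ..., I_k be nonnegative reals with ∑_{i=1}^{h} I_i ≥ 3m and ∑_{i=h+1}^{k} I_i ≥ 3m for some m > 0. If I_i · I_j ≤ 3m²·2^{i-j} for all 1 ≤ i ≤ h < j ≤ k, then we reach a contradiction; i.e., it cannot be that all products satisfy I_i·I_j ≤ 3m²·2^{i-j} while both partial sums are at least 3m. -/
lemma sumA9 (h : ℕ) : ∑ i ∈ Finset.Icc 1 h, (2:ℝ)^(i:ℤ) = 2^((h:ℤ)+1) - 2 := by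
  induction h with
  | zero => simp
  | succ n ih =>
    rw [Finset.sum_Icc_succ_top (by omega), ih]
    have e1 : ((n+1 : ℕ) : ℤ) = (n:ℤ)+1 := by push_cast; ring
    rw [e1]
    have e2 : (2:ℝ)^((n:ℤ)+1+1) = 2^((n:ℤ)+1) * 2 := zpow_add_one₀ two_ne_zero _
    linarith

lemma sumB9 (h k : ℕ) (hk : h ≤ k) :
    ∑ j ∈ Finset.Icc (h+1) k, (2:ℝ)^(-(j:ℤ)) = 2^(-(h:ℤ)) - 2^(-(k:ℤ)) := by
  induction k, hk using Nat.le_induction with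
  | base => simp
  | succ n hn ih =>
    rw [Finset.sum_Icc_succ_top (by omega), ih]
    have e1 : ((n+1 : ℕ) : ℤ) = (n:ℤ)+1 := by push_cast; ring
    rw [e1]
    have e2 : (2:ℝ)^(-(n:ℤ)) = 2^(-((n:ℤ)+1)) * 2 := by
      rw [← zpow_add_one₀ two_ne_zero]; ring_nf
    linarith

/-- The counting argument ruling out large independent sets: if the two partial
sums are each at least `3m` but all the cross products satisfy
`I_i·I_j ≤ 3m²·2^{i-j}`, we get a contradiction. -/
theorem stmt9 (h k : ℕ) (hh : 1 ≤ h) (hk : h < k)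
    (I : ℕ → ℝ) (hI : ∀ i, 0 ≤ I i) (m : ℝ) (hm : 0 < m)
    (h1 : 3 * m ≤ ∑ i ∈ Finset.Icc 1 h, I i)
    (h2 : 3 * m ≤ ∑ i ∈ Finset.Icc (h + 1) k, I i)
    (hprod : ∀ i ∈ Finset.Icc 1 h, ∀ j ∈ Finset.Icc (h + 1) k,
      I i * I j ≤ 3 * m ^ 2 * (2 : ℝ) ^ ((i : ℤ) - (j : ℤ))) :
    False := by
  have key : (3*m)*(3*m) ≤
      (∑ i ∈ Finset.Icc 1 h, I i) * (∑ j ∈ Finset.Icc (h+1) k, I j) := by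
    apply mul_le_mul h1 h2 (by linarith) (le_trans (by linarith) h1)
  rw [Finset.sum_mul_sum] at key
  have bound : ∑ i ∈ Finset.Icc 1 h, ∑ j ∈ Finset.Icc (h+1) k, I i * I j ≤
      ∑ i ∈ Finset.Icc 1 h, ∑ j ∈ Finset.Icc (h+1) k,
        3 * m ^ 2 * ((2:ℝ)^(i:ℤ) * (2:ℝ)^(-(j:ℤ))) := by
    apply Finset.sum_le_sum
    intro i hi
    apply Finset.sum_le_sum
    intro j hj
    have := hprod i hi j hj
    rwa [sub_eq_add_neg, zpow_add₀ two_ne_zero] at this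
  have eq1 : ∑ i ∈ Finset.Icc 1 h, ∑ j ∈ Finset.Icc (h+1) k,
      3 * m ^ 2 * ((2:ℝ)^(i:ℤ) * (2:ℝ)^(-(j:ℤ)))
      = 3 * m ^ 2 * ((∑ i ∈ Finset.Icc 1 h, (2:ℝ)^(i:ℤ)) *
          (∑ j ∈ Finset.Icc (h+1) k, (2:ℝ)^(-(j:ℤ)))) := by
    rw [Finset.sum_mul_sum, Finset.mul_sum]
    apply Finset.sum_congr rfl
    intro i _
    rw [Finset.mul_sum]
  rw [eq1, sumA9, sumB9 h k hk.le] at bound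
  have pa : (2:ℝ) ≤ 2^((h:ℤ)+1) := by
    calc (2:ℝ) = 2^(1:ℤ) := by norm_num
    _ ≤ 2^((h:ℤ)+1) := by
        apply zpow_le_zpow_right₀ (by norm_num); omega
  have pb : (2:ℝ)^(-(k:ℤ)) ≤ 2^(-(h:ℤ)) := by
    apply zpow_le_zpow_right₀ (by norm_num); omega
  have pc : (0:ℝ) < 2^(-(k:ℤ)) := by positivity
  have pd : (2:ℝ)^((h:ℤ)+1) * 2^(-(h:ℤ)) = 2 := by
    rw [← zpow_add₀ two_ne_zero]; norm_num
  have pe : (0:ℝ) < 2^(-(h:ℤ)) := by positivity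
  have h3 : ((2:ℝ)^((h:ℤ)+1) - 2) * (2^(-(h:ℤ)) - 2^(-(k:ℤ))) ≤ 2 := by
    nlinarith [mul_nonneg (by linarith : (0:ℝ) ≤ 2^((h:ℤ)+1) - 2) pc.le]
  nlinarith [key, bound, mul_pos hm hm, sq_nonneg m]
end

section
/- Let G' be a graph on a vertex set of integers such that no pair of vertices is 'bad', i.e., no two vertices are joined by two edge-disjoint monotone paths. Define a relation on V(G') by a <_P b iff a < b (as integers) and there is a monotone path in G' from a to b. Then <_P is a strict partial order, its cover graph equals G', and the resulting poset is uniquely generated. -/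
/-- A monotone path from `a` to `b` in a graph on integer vertices: a list of
vertices starting at `a`, ending at `b`, strictly increasing, with consecutive
vertices adjacent. -/
def IsMonotonePath (G : SimpleGraph ℤ) (a b : ℤ) (l : List ℤ) : Prop :=
  l.head? = some a ∧ l.getLast? = some b ∧
    l.Chain' fun x y => x < y ∧ G.Adj x y

/-- The list of edges of a path given by a list of vertices. -/
def pathEdges (l : List ℤ) : List (Sym2 ℤ) :=
  (l.zip l.tail).map fun p => s(p.1, p.2)

/-- A pair `{a, b}` is bad if there exist two edge-disjoint monotone paths both
having endpoints `a` and `b`. -/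
def BadPair (G : SimpleGraph ℤ) (a b : ℤ) : Prop :=
  a ≠ b ∧ ∃ l₁ l₂ : List ℤ, IsMonotonePath G a b l₁ ∧ IsMonotonePath G a b l₂ ∧
    (pathEdges l₁).Disjoint (pathEdges l₂)


/-! Monotone paths are strictly increasing lists, so two with the same endpoints `a`, `b`
coincide once they have the same vertices. Without bad pairs they are unique: if two of them
share an inner vertex, split both there and induct on `b - a`; otherwise their only possible
common edge is `ab`, which forces both to be `[a, b]`, and with no common edge `{a, b}` would
be bad. Consequently an edge `ab` with `a < b` is a cover, since a detour through some `c`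
would be a second path, and a cover is an edge, since a longer path has an inner vertex; so
chains of covers are exactly monotone paths. -/

variable {G : SimpleGraph ℤ} {a b c x : ℤ} {l l₁ l₂ p s : List ℤ}

lemma exists_eq_append_of_mem_pathEdges {e : Sym2 ℤ} :
    ∀ {l : List ℤ}, e ∈ pathEdges l → ∃ p s u v, l = p ++ u :: v :: s ∧ e = s(u, v)
  | [] | [_] => by simp [pathEdges]
  | x :: y :: t => by
    intro he
    rw [show pathEdges (x :: y :: t) = s(x, y) :: pathEdges (y :: t) from rfl,
      List.mem_cons] at he
    rcases he with rfl | he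
    · exact ⟨[], t, x, y, rfl, rfl⟩
    · obtain ⟨p, s, u, v, hyt, rfl⟩ := exists_eq_append_of_mem_pathEdges he
      exact ⟨x :: p, s, u, v, by rw [hyt, List.cons_append], rfl⟩

lemma mem_of_mem_pathEdges {e : Sym2 ℤ} (he : e ∈ pathEdges l) (hx : x ∈ e) : x ∈ l := by
  obtain ⟨p, s, u, v, rfl, rfl⟩ := exists_eq_append_of_mem_pathEdges he
  rcases Sym2.mem_iff.mp hx with rfl | rfl <;> simp

lemma isMonotonePath_pair (hab : a < b) (hadj : G.Adj a b) : IsMonotonePath G a b [a, b] :=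
  ⟨rfl, rfl, List.isChain_pair.mpr ⟨hab, hadj⟩⟩

lemma isMonotonePath_cons_iff (hab : a ≠ b) :
    IsMonotonePath G a b (a :: l) ↔
      (a :: l).IsChain (fun x y => x < y ∧ G.Adj x y) ∧ l.getLast? = some b := by
  cases l with
  | nil => simp [IsMonotonePath, hab]
  | cons c l =>
    rw [IsMonotonePath, List.Chain']
    simp [List.getLast?_cons_of_ne_nil, and_comm]

lemma isMonotonePath_append_cons_iff :
    IsMonotonePath G a b (p ++ c :: s) ↔
      IsMonotonePath G a c (p ++ [c]) ∧ IsMonotonePath G c b (c :: s) := by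
  simp only [IsMonotonePath, List.head?_append, List.head?_cons, List.getLast?_singleton,
    List.getLast?_append]
  rw [List.Chain', List.isChain_split]
  tauto

namespace IsMonotonePath

lemma pairwise (h : IsMonotonePath G a b l) : l.Pairwise (· < ·) :=
  List.isChain_iff_pairwise.mp (h.2.2.imp fun _ _ => And.left)

lemma head_mem (h : IsMonotonePath G a b l) : a ∈ l := List.mem_of_mem_head? h.1

lemma last_mem (h : IsMonotonePath G a b l) : b ∈ l := List.mem_of_getLast? h.2.1

lemma mem_Icc (h : IsMonotonePath G a b l) (hx : x ∈ l) : a ≤ x ∧ x ≤ b := by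
  obtain ⟨t, rfl⟩ := List.head?_eq_some_iff.mp h.1
  obtain ⟨i, hi⟩ := List.getLast?_eq_some_iff.mp h.2.1
  have hpw := h.pairwise
  constructor
  · rcases List.mem_cons.mp hx with rfl | hx
    · exact le_rfl
    · exact (List.pairwise_cons.mp hpw).1 x hx |>.le
  · rw [hi] at hx hpw
    rcases List.mem_append.mp hx with hx | hx
    · exact (List.pairwise_append.mp hpw).2.2 x hx b (List.mem_singleton_self b) |>.le
    · exact (List.mem_singleton.mp hx).le

lemma le (h : IsMonotonePath G a b l) : a ≤ b := (h.mem_Icc h.last_mem).1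

lemma lt_of_ne (h : IsMonotonePath G a b l) (hab : a ≠ b) : a < b := h.le.lt_of_ne hab

lemma append (h₁ : IsMonotonePath G a c l₁) (h₂ : IsMonotonePath G c b l₂) :
    IsMonotonePath G a b (l₁ ++ l₂.tail) := by
  obtain ⟨p, rfl⟩ := List.getLast?_eq_some_iff.mp h₁.2.1
  obtain ⟨s, rfl⟩ := List.head?_eq_some_iff.mp h₂.1
  simpa using isMonotonePath_append_cons_iff.mpr ⟨h₁, h₂⟩

lemma exists_lt_of_mem_pathEdges (h : IsMonotonePath G a b l) {e : Sym2 ℤ}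
    (he : e ∈ pathEdges l) : ∃ u v, u < v ∧ u ∈ l ∧ v ∈ l ∧ e = s(u, v) := by
  obtain ⟨p, s, u, v, rfl, rfl⟩ := exists_eq_append_of_mem_pathEdges he
  have huv : u < v := (List.isChain_append_cons_cons.mp h.2.2).2.1.1
  exact ⟨u, v, huv, by simp, by simp, rfl⟩

lemma eq_or_eq_of_mk_mem_pathEdges (h : IsMonotonePath G a b l) (he : s(a, b) ∈ pathEdges l)
    (hx : x ∈ l) : x = a ∨ x = b := by
  obtain ⟨p, s, u, v, rfl, hab⟩ := exists_eq_append_of_mem_pathEdges he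
  have hpw := List.pairwise_append.mp h.pairwise
  have huv : u < v := List.rel_of_pairwise_cons hpw.2.1 (by simp)
  obtain ⟨rfl, rfl⟩ : a = u ∧ b = v := by
    have := h.le
    rcases Sym2.eq_iff.mp hab with h | h <;> omega
  rcases List.mem_append.mp hx with hx | hx
  · have := (h.mem_Icc (List.mem_append_left _ hx)).1
    have := hpw.2.2 x hx a (by simp)
    omega
  · rcases List.mem_cons.mp hx with hx | hx
    · exact Or.inl hx
    rcases List.mem_cons.mp hx with hx | hx
    · exact Or.inr hx
    have := (h.mem_Icc (List.mem_append_right _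
      (List.mem_cons_of_mem _ (List.mem_cons_of_mem _ hx)))).2
    have := List.rel_of_pairwise_cons (List.pairwise_cons.mp hpw.2.1).2 hx
    omega

lemma eq_of_forall_mem_eq_or_eq (h₁ : IsMonotonePath G a b l₁) (h₂ : IsMonotonePath G a b l₂)
    (hl₁ : ∀ x ∈ l₁, x = a ∨ x = b) (hl₂ : ∀ x ∈ l₂, x = a ∨ x = b) : l₁ = l₂ :=
  h₁.pairwise.eq_of_mem_iff h₂.pairwise fun x =>
    ⟨fun hx => (hl₁ x hx).elim (· ▸ h₂.head_mem) (· ▸ h₂.last_mem),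
      fun hx => (hl₂ x hx).elim (· ▸ h₁.head_mem) (· ▸ h₁.last_mem)⟩

theorem unique (hbad : ∀ a b, ¬ BadPair G a b) (h₁ : IsMonotonePath G a b l₁)
    (h₂ : IsMonotonePath G a b l₂) : l₁ = l₂ := by
  induction hn : (b - a).toNat using Nat.strong_induction_on generalizing a b l₁ l₂ with
  | _ n ih =>
  by_cases hc : ∃ c ∈ l₁, c ∈ l₂ ∧ c ≠ a ∧ c ≠ b
  · obtain ⟨c, hc₁, hc₂, hca, hcb⟩ := hc
    obtain ⟨p₁, s₁, rfl⟩ := List.append_of_mem hc₁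
    obtain ⟨p₂, s₂, rfl⟩ := List.append_of_mem hc₂
    obtain ⟨hp₁, hs₁⟩ := isMonotonePath_append_cons_iff.mp h₁
    obtain ⟨hp₂, hs₂⟩ := isMonotonePath_append_cons_iff.mp h₂
    have hac := hp₁.lt_of_ne hca.symm
    have hcb := hs₁.lt_of_ne hcb
    rw [List.append_cancel_right (ih _ (by omega) hp₁ hp₂ rfl), ih _ (by omega) hs₁ hs₂ rfl]
  · have hcommon : ∀ x ∈ l₁, x ∈ l₂ → x = a ∨ x = b := by
      intro x hx₁ hx₂
      by_contra! hx
      exact hc ⟨x, hx₁, hx₂, hx⟩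
    obtain rfl | ⟨e, he₁, he₂⟩ : a = b ∨ ∃ e ∈ pathEdges l₁, e ∈ pathEdges l₂ := by
      by_contra! hno
      exact hbad a b ⟨hno.1, l₁, l₂, h₁, h₂, fun e he₁ he₂ => hno.2 e he₁ he₂⟩
    · have hl {l} (h : IsMonotonePath G a a l) (x) (hx : x ∈ l) : x = a ∨ x = a :=
        Or.inl (le_antisymm (h.mem_Icc hx).2 (h.mem_Icc hx).1)
      exact eq_of_forall_mem_eq_or_eq h₁ h₂ (hl h₁) (hl h₂)
    obtain ⟨u, v, huv, hu, hv, rfl⟩ := h₁.exists_lt_of_mem_pathEdges he₁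
    have hu := hcommon u hu (mem_of_mem_pathEdges he₂ (Sym2.mem_mk_left u v))
    have hv := hcommon v hv (mem_of_mem_pathEdges he₂ (Sym2.mem_mk_right u v))
    obtain ⟨rfl, rfl⟩ : u = a ∧ v = b := by have := h₁.le; omega
    exact eq_of_forall_mem_eq_or_eq h₁ h₂
      (fun _ => h₁.eq_or_eq_of_mk_mem_pathEdges he₁) (fun _ => h₂.eq_or_eq_of_mk_mem_pathEdges he₂)

end IsMonotonePath

def MonotoneLT (G : SimpleGraph ℤ) (a b : ℤ) : Prop :=
  a < b ∧ ∃ l, IsMonotonePath G a b l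

lemma MonotoneLT.trans : MonotoneLT G a b → MonotoneLT G b c → MonotoneLT G a c :=
  fun ⟨hab, _, h₁⟩ ⟨hbc, _, h₂⟩ => ⟨hab.trans hbc, _, h₁.append h₂⟩

lemma monotoneLT_covBy_iff (hbad : ∀ a b, ¬ BadPair G a b) :
    (MonotoneLT G a b ∧ ¬ ∃ c, MonotoneLT G a c ∧ MonotoneLT G c b) ↔ a < b ∧ G.Adj a b := by
  constructor
  · rintro ⟨⟨hab, l, hl⟩, hno⟩
    obtain ⟨_ | ⟨c, s⟩, rfl⟩ := List.head?_eq_some_iff.mp hl.1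
    · exact absurd hl.last_mem (by simpa using hab.ne')
    obtain ⟨hac, hcb⟩ := isMonotonePath_append_cons_iff (p := [a]).mp hl
    have hac' := List.isChain_pair.mp hac.2.2
    obtain rfl | hcb' := eq_or_ne c b
    · exact hac'
    exact absurd ⟨c, ⟨hac'.1, _, hac⟩, ⟨hcb.lt_of_ne hcb', _, hcb⟩⟩ hno
  · rintro ⟨hab, hadj⟩
    have hpair := isMonotonePath_pair hab hadj
    refine ⟨⟨hab, _, hpair⟩, ?_⟩
    rintro ⟨c, ⟨hac, _, h₁⟩, ⟨hcb, _, h₂⟩⟩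
    have hc : c ∈ [a, b] := (h₁.append h₂).unique hbad hpair ▸ List.mem_append_left _ h₁.last_mem
    simp only [List.mem_cons, List.not_mem_nil, or_false] at hc
    omega

/-- If a graph `G` on integer vertices has no bad pair, then the relation
`a <_P b ↔ a < b and there is a monotone path from a to b` is a strict partial
order (irreflexive and transitive), its cover graph equals `G`, and the
resulting poset is uniquely generated. -/
theorem stmt11 (G : SimpleGraph ℤ) (hbad : ∀ a b : ℤ, ¬ BadPair G a b)
    (r : ℤ → ℤ → Prop) (hr : ∀ a b, r a b ↔ a < b ∧ ∃ l, IsMonotonePath G a b l)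
    (cov : ℤ → ℤ → Prop) (hcov : ∀ a b, cov a b ↔ r a b ∧ ¬ ∃ c, r a c ∧ r c b) :
    (∀ a, ¬ r a a) ∧ Transitive r ∧
    (∀ a b, G.Adj a b ↔ (cov a b ∨ cov b a)) ∧
    (∀ a b, r a b → ∃! l : List ℤ, List.Chain cov a l ∧ l.getLast? = some b) := by
  obtain rfl : r = MonotoneLT G := funext₂ fun a b => propext (hr a b)
  obtain rfl : cov = fun a b => a < b ∧ G.Adj a b :=
    funext₂ fun a b => propext ((hcov a b).trans (monotoneLT_covBy_iff hbad))
  refine ⟨fun a h => h.1.false, fun _ _ _ => MonotoneLT.trans, fun a b => ?_, ?_⟩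
  · constructor
    · intro h
      rcases (G.ne_of_adj h).lt_or_gt with hab | hba
      exacts [Or.inl ⟨hab, h⟩, Or.inr ⟨hba, h.symm⟩]
    · rintro (⟨-, h⟩ | ⟨-, h⟩)
      exacts [h, h.symm]
  · rintro a b ⟨hab, l, hl⟩
    obtain ⟨t, rfl⟩ := List.head?_eq_some_iff.mp hl.1
    refine ⟨t, (isMonotonePath_cons_iff hab.ne).mp hl, fun t' ht' => ?_⟩
    exact List.cons_injective (((isMonotonePath_cons_iff hab.ne).mpr ht').unique hbad hl)
end
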